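/- arXiv:2502.16875 — 10 statements merged into one kernel-verified Lean document; each statement's English description precedes it below -/
import Mathlib

section
/- Let k be a field with more than two elements and let A be a (not necessarily associative, not necessarily unital) algebra over k whose multiplication satisfies the right self-distributive law (a*b)*c = (a*c)*(b*c) for all a, b, c ∈ A. Then (a*b)*c = 0 for all a, b, c ∈ A; that is, A is right-nilpotent of index 3. -/
/-- Over a field with more than two elements, any (not necessarily
associative or unital) algebra satisfying the right self-distributive law
`(a*b)*c = (a*c)*(b*c)` is right-nilpotent of index 3: `(a*b)*c = 0`. -/
theorem stmt_0 (k A : Type*) [Field k]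
    [NonUnitalNonAssocRing A] [Module k A]
    [SMulCommClass k A A] [IsScalarTower k A A]
    (hk : 2 < Cardinal.mk k)
    (hSD : ∀ a b c : A, (a * b) * c = (a * c) * (b * c)) :
    ∀ a b c : A, (a * b) * c = 0 := by
  obtain ⟨α, hα0, hα1⟩ : ∃ α : k, α ≠ 0 ∧ α ≠ 1 := by
    by_contra h
    push_neg at h
    have hsub : (Set.univ : Set k) ⊆ ({0, 1} : Set k) := by
      intro x _
      rcases (em (x = 0)).elim (fun hx => Or.inl hx) (fun hx => Or.inr (h x hx)) with hx | hx
      · simp [hx]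
      · simp [hx]
    have hle : Cardinal.mk k ≤ 2 := by
      calc Cardinal.mk k = Cardinal.mk (Set.univ : Set k) := Cardinal.mk_univ.symm
        _ ≤ Cardinal.mk ({0, 1} : Set k) := Cardinal.mk_le_mk_of_subset hsub
        _ ≤ Cardinal.mk ({1} : Set k) + 1 := Cardinal.mk_insert_le
        _ = 2 := by rw [Cardinal.mk_singleton]; norm_num
    exact absurd (lt_of_lt_of_le hk hle) (by norm_num)
  intro a b c
  have h1 : (a * b) * (α • c) = α • ((a * b) * c) := mul_smul_comm α (a * b) c
  have h2 : (a * b) * (α • c) = (α * α) • ((a * b) * c) := by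
    rw [hSD a b (α • c), mul_smul_comm α a c, mul_smul_comm α b c,
      smul_mul_smul_comm, ← hSD a b c]
  have h3 : (α * α - α) • ((a * b) * c) = 0 := by
    rw [sub_smul, ← h2, ← h1, sub_self]
  have hne : α * α - α ≠ 0 := by
    intro h
    have : α * (α - 1) = 0 := by ring_nf; linear_combination h
    rcases mul_eq_zero.mp this with h' | h'
    · exact hα0 h'
    · exact hα1 (sub_eq_zero.mp h')
  exact (smul_eq_zero.mp h3).resolve_left hne |>.symm ▸ rfl
end

section
/- Let A be a 2-dimensional associative algebra over a field k that contains no multiplicative identity element. Then there exists a k-basis {e₁, e₂} of A such that the multiplication table is one of the following five: (1) e₁² = e₁, e₁e₂ = 0, e₂e₁ = e₂, e₂² = 0; (2) e₁² = e₁, e₁e₂ = e₂, e₂e₁ = 0, e₂² = 0; (3) e₁² = e₁, e₁e₂ = 0, e₂e₁ = 0, e₂² = 0; (4) e₁² = e₂, e₁e₂ = 0, e₂e₁ = 0, e₂² = 0; (5) e₁² = 0, e₁e₂ = 0, e₂e₁ = 0, e₂² = 0. -/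
/-!
If `A` has a nonzero idempotent `e`, split `A` into Peirce components with respect to `e`.
A nonzero vector in `eA(1-e)` or `(1-e)Ae` together with `e` gives table (2) or (1).
Otherwise `eA = Ae`, and a nonzero `w` in `(1-e)A(1-e)` squares to a multiple `d • w`:
for `d = 0` this is table (3), while for `d ≠ 0` the element `e + d⁻¹ • w` would be an
identity; if there is no such `w`, then `e` itself is an identity.

If `A` has no nonzero idempotent but some `a * a ≠ 0`, then `A` has basis `a, a²`, and writing
`a³ = c • a + d • a²` any nonzero `c` or `d` produces an idempotent, so `a³ = 0`: table (4).
Finally, if every square vanishes then `a * b ≠ 0` would make `a, a * b` a basis annihilated by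
left multiplication with `a`, which is absurd; so the multiplication is zero: table (5).
-/

open Module

section Basis

variable {k V : Type*} [Field k] [AddCommGroup V] [Module k V]

lemma exists_basis_fin_two_of_linearIndependent (hdim : finrank k V = 2) {u v : V}
    (h : LinearIndependent k ![u, v]) :
    ∃ C : Basis (Fin 2) k V, C 0 = u ∧ C 1 = v :=
  ⟨basisOfLinearIndependentOfCardEqFinrank h (by simp [hdim]), by simp, by simp⟩

lemma exists_eq_smul_add_smul_of_linearIndependent (hdim : finrank k V = 2) {u v : V}
    (h : LinearIndependent k ![u, v]) (x : V) : ∃ s t : k, x = s • u + t • v := by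
  obtain ⟨C, rfl, rfl⟩ := exists_basis_fin_two_of_linearIndependent hdim h
  exact ⟨C.repr x 0, C.repr x 1, by
    rw [← Fin.sum_univ_two (fun i ↦ C.repr x i • C i), C.sum_repr]⟩

end Basis

section Algebra

variable {k A : Type*} [Field k] [NonUnitalRing A] [Module k A]

namespace IsIdempotentElem

section IsScalarTower

variable [IsScalarTower k A A]

lemma linearIndependent_of_mul_eq_zero {e u : A} (he : IsIdempotentElem e)
    (he0 : e ≠ 0) (hu0 : u ≠ 0) (hue : u * e = 0) : LinearIndependent k ![e, u] := by
  refine (LinearIndependent.pair_iff' he0).2 fun c hc ↦ hu0 ?_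
  rw [← hue, ← hc, smul_mul_assoc, he.eq]

lemma exists_basis_of_mul_eq_self_of_mul_eq_zero {e : A} (he : IsIdempotentElem e)
    (he0 : e ≠ 0) (hdim : finrank k A = 2) {u : A} (hu0 : u ≠ 0)
    (heu : e * u = u) (hue : u * e = 0) :
    ∃ C : Basis (Fin 2) k A,
      C 0 * C 0 = C 0 ∧ C 0 * C 1 = C 1 ∧ C 1 * C 0 = 0 ∧ C 1 * C 1 = 0 := by
  obtain ⟨C, rfl, rfl⟩ := exists_basis_fin_two_of_linearIndependent hdim
    (he.linearIndependent_of_mul_eq_zero he0 hu0 hue)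
  refine ⟨C, he.eq, heu, hue, ?_⟩
  simpa only [mul_assoc, heu, zero_mul] using congrArg (· * C 1) hue

end IsScalarTower

section SMulCommClass

variable [SMulCommClass k A A]

lemma linearIndependent_of_mul_eq_zero' {e u : A} (he : IsIdempotentElem e)
    (he0 : e ≠ 0) (hu0 : u ≠ 0) (heu : e * u = 0) : LinearIndependent k ![e, u] := by
  refine (LinearIndependent.pair_iff' he0).2 fun c hc ↦ hu0 ?_
  rw [← heu, ← hc, mul_smul_comm, he.eq]

lemma exists_basis_of_mul_eq_zero_of_mul_eq_self {e : A} (he : IsIdempotentElem e)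
    (he0 : e ≠ 0) (hdim : finrank k A = 2) {v : A} (hv0 : v ≠ 0)
    (hev : e * v = 0) (hve : v * e = v) :
    ∃ C : Basis (Fin 2) k A,
      C 0 * C 0 = C 0 ∧ C 0 * C 1 = 0 ∧ C 1 * C 0 = C 1 ∧ C 1 * C 1 = 0 := by
  obtain ⟨C, rfl, rfl⟩ := exists_basis_fin_two_of_linearIndependent hdim
    (he.linearIndependent_of_mul_eq_zero' he0 hv0 hev)
  refine ⟨C, he.eq, hev, hve, ?_⟩
  simpa only [← mul_assoc, hve, mul_zero] using congrArg (C 1 * ·) hev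

end SMulCommClass

end IsIdempotentElem

variable [SMulCommClass k A A] [IsScalarTower k A A]

lemma isIdempotentElem_inv_smul_of_mul_self_eq_smul {c : k} {x : A} (h : x * x = c • x) :
    IsIdempotentElem (c⁻¹ • x) := by
  rcases eq_or_ne c 0 with rfl | hc
  · simp [IsIdempotentElem]
  · rw [IsIdempotentElem, smul_mul_smul_comm, h, smul_smul]
    field_simp

lemma forall_mul_eq_self_of_linearIndependent (hdim : finrank k A = 2) {e u v : A}
    (h : LinearIndependent k ![u, v]) (heu : e * u = u) (hev : e * v = v)
    (hue : u * e = u) (hve : v * e = v) : ∀ a : A, e * a = a ∧ a * e = a := by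
  intro a
  obtain ⟨s, t, rfl⟩ := exists_eq_smul_add_smul_of_linearIndependent hdim h a
  simp only [mul_add, add_mul, mul_smul_comm, smul_mul_assoc, heu, hev, hue, hve, and_self]

namespace IsIdempotentElem

lemma exists_basis_of_mul_eq_zero_of_mul_eq_zero {e : A} (he : IsIdempotentElem e)
    (he0 : e ≠ 0) (hdim : finrank k A = 2)
    (hnounit : ¬ ∃ e : A, ∀ a : A, e * a = a ∧ a * e = a) {w : A} (hw0 : w ≠ 0)
    (hew : e * w = 0) (hwe : w * e = 0) :
    ∃ C : Basis (Fin 2) k A,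
      C 0 * C 0 = C 0 ∧ C 0 * C 1 = 0 ∧ C 1 * C 0 = 0 ∧ C 1 * C 1 = 0 := by
  have hind := he.linearIndependent_of_mul_eq_zero' (k := k) he0 hw0 hew
  obtain ⟨c, d, hww⟩ := exists_eq_smul_add_smul_of_linearIndependent hdim hind (w * w)
  have hc : c = 0 := by
    have : c • e = 0 := by
      simpa [hww, mul_add, mul_smul_comm, he.eq, hew] using
        (show e * (w * w) = 0 by rw [← mul_assoc, hew, zero_mul])
    exact (smul_eq_zero.1 this).resolve_right he0
  subst hc
  by_cases hd : d = 0
  · obtain ⟨C, rfl, rfl⟩ := exists_basis_fin_two_of_linearIndependent hdim hind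
    exact ⟨C, he.eq, hew, hwe, by simpa [hd] using hww⟩
  · refine absurd ⟨e + d⁻¹ • w, ?_⟩ hnounit
    refine forall_mul_eq_self_of_linearIndependent hdim hind ?_ ?_ ?_ ?_ <;>
      simp [mul_add, add_mul, mul_smul_comm, smul_mul_assoc, smul_smul, he.eq, hew, hwe, hww, hd]

lemma exists_basis_of_not_exists_one {e : A} (he : IsIdempotentElem e)
    (he0 : e ≠ 0) (hdim : finrank k A = 2)
    (hnounit : ¬ ∃ e : A, ∀ a : A, e * a = a ∧ a * e = a) :
    ∃ C : Basis (Fin 2) k A,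
      (C 0 * C 0 = C 0 ∧ C 0 * C 1 = 0   ∧ C 1 * C 0 = C 1 ∧ C 1 * C 1 = 0) ∨
      (C 0 * C 0 = C 0 ∧ C 0 * C 1 = C 1 ∧ C 1 * C 0 = 0   ∧ C 1 * C 1 = 0) ∨
      (C 0 * C 0 = C 0 ∧ C 0 * C 1 = 0   ∧ C 1 * C 0 = 0   ∧ C 1 * C 1 = 0) := by
  have hee (y : A) : e * (e * y) = e * y := by rw [← mul_assoc, he.eq]
  by_cases hr : ∃ x : A, e * x * e ≠ e * x
  · obtain ⟨x, hx⟩ := hr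
    obtain ⟨C, hC⟩ := he.exists_basis_of_mul_eq_self_of_mul_eq_zero he0 hdim
      (u := e * x - e * x * e) (sub_ne_zero.2 hx.symm)
      (by simp only [mul_sub, mul_assoc, hee]) (by simp only [sub_mul, mul_assoc, he.eq, sub_self])
    exact ⟨C, Or.inr (Or.inl hC)⟩
  by_cases hl : ∃ x : A, e * x * e ≠ x * e
  · obtain ⟨x, hx⟩ := hl
    obtain ⟨C, hC⟩ := he.exists_basis_of_mul_eq_zero_of_mul_eq_self he0 hdim
      (v := x * e - e * x * e) (sub_ne_zero.2 hx.symm)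
      (by simp only [mul_sub, mul_assoc, hee, sub_self]) (by simp only [sub_mul, mul_assoc, he.eq])
    exact ⟨C, Or.inl hC⟩
  push Not at hr hl
  by_cases h1 : ∃ x : A, e * x ≠ x
  · obtain ⟨x, hx⟩ := h1
    obtain ⟨C, hC⟩ := he.exists_basis_of_mul_eq_zero_of_mul_eq_zero he0 hdim hnounit
      (w := x - e * x) (sub_ne_zero.2 hx.symm)
      (by rw [mul_sub, hee, sub_self]) (by rw [sub_mul, hr, ← hl, hr, sub_self])
    exact ⟨C, Or.inr (Or.inr hC)⟩
  push Not at h1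
  exact absurd ⟨e, fun x ↦ ⟨h1 x, by rw [← hl, hr, h1]⟩⟩ hnounit

end IsIdempotentElem

lemma exists_basis_of_mul_self_ne_zero (hdim : finrank k A = 2)
    (hidem : ∀ e : A, IsIdempotentElem e → e = 0) {a : A} (ha : a * a ≠ 0) :
    ∃ C : Basis (Fin 2) k A,
      C 0 * C 0 = C 1 ∧ C 0 * C 1 = 0 ∧ C 1 * C 0 = 0 ∧ C 1 * C 1 = 0 := by
  have mul_self_ne_smul (x : A) (c : k) (hx : x ≠ 0) (hc : c ≠ 0) : x * x ≠ c • x :=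
    fun h ↦ smul_ne_zero (inv_ne_zero hc) hx
      (hidem _ (isIdempotentElem_inv_smul_of_mul_self_eq_smul h))
  have ha0 : a ≠ 0 := by rintro rfl; simp at ha
  have hind : LinearIndependent k ![a, a * a] := (LinearIndependent.pair_iff' ha0).2
    fun c hc ↦ mul_self_ne_smul a c ha0 (by rintro rfl; simp [← hc] at ha) hc.symm
  obtain ⟨c, d, hcube⟩ := exists_eq_smul_add_smul_of_linearIndependent hdim hind (a * (a * a))
  have hcube' : a * a * a = c • a + d • (a * a) := by rw [mul_assoc, hcube]
  have hfour : a * a * (a * a) = c • (a * a) + d • (c • a + d • (a * a)) := by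
    rw [mul_assoc, hcube, mul_add, mul_smul_comm, mul_smul_comm, hcube]
  have hc : c = 0 := by
    by_contra hc
    refine mul_self_ne_smul (a * a - d • a) c ?_ hc ?_
    · rw [sub_ne_zero]
      exact ((LinearIndependent.pair_iff' ha0).1 hind d).symm
    · simp only [mul_sub, sub_mul, smul_mul_assoc, mul_smul_comm, hfour, hcube, hcube']
      module
  subst hc
  have hd : d = 0 := by
    refine by_contra fun hd ↦ mul_self_ne_smul (a * a) (d * d) ha (mul_ne_zero hd hd) ?_
    rw [hfour]
    module
  subst hd
  simp only [zero_smul, add_zero] at hcube hcube'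
  obtain ⟨C, rfl, hC1⟩ := exists_basis_fin_two_of_linearIndependent hdim hind
  refine ⟨C, hC1.symm, ?_, ?_, ?_⟩ <;> simp [hC1, hcube, hcube', ← mul_assoc]

lemma mul_eq_zero_of_forall_mul_self_eq_zero (hdim : finrank k A = 2)
    (hsq : ∀ a : A, a * a = 0) (a b : A) : a * b = 0 := by
  by_contra hab
  have ha0 : a ≠ 0 := by rintro rfl; simp at hab
  have hind : LinearIndependent k ![a, a * b] := (LinearIndependent.pair_iff' ha0).2 fun c hc ↦ by
    have : c • (a * b) = 0 := by rw [← smul_mul_assoc, hc, mul_assoc, hsq, mul_zero]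
    rcases smul_eq_zero.1 this with rfl | h
    · exact hab (by simpa using hc.symm)
    · exact hab h
  obtain ⟨s, t, hb⟩ := exists_eq_smul_add_smul_of_linearIndependent hdim hind b
  apply hab
  rw [hb, mul_add, mul_smul_comm, mul_smul_comm, ← mul_assoc, hsq, zero_mul, smul_zero,
    smul_zero, add_zero]

end Algebra

/-- A 2-dimensional associative algebra over a field with no
multiplicative identity admits a basis `{e₁, e₂}` whose multiplication table is
one of five explicit tables. -/
theorem stmt_1 (k A : Type*) [Field k] [NonUnitalRing A] [Module k A]
    [SMulCommClass k A A] [IsScalarTower k A A]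
    (hdim : Module.finrank k A = 2)
    (hnounit : ¬ ∃ e : A, ∀ a : A, e * a = a ∧ a * e = a) :
    ∃ C : Module.Basis (Fin 2) k A,
      (C 0 * C 0 = C 0 ∧ C 0 * C 1 = 0   ∧ C 1 * C 0 = C 1 ∧ C 1 * C 1 = 0) ∨
      (C 0 * C 0 = C 0 ∧ C 0 * C 1 = C 1 ∧ C 1 * C 0 = 0   ∧ C 1 * C 1 = 0) ∨
      (C 0 * C 0 = C 0 ∧ C 0 * C 1 = 0   ∧ C 1 * C 0 = 0   ∧ C 1 * C 1 = 0) ∨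
      (C 0 * C 0 = C 1 ∧ C 0 * C 1 = 0   ∧ C 1 * C 0 = 0   ∧ C 1 * C 1 = 0) ∨
      (C 0 * C 0 = 0   ∧ C 0 * C 1 = 0   ∧ C 1 * C 0 = 0   ∧ C 1 * C 1 = 0) := by
  by_cases hidem : ∃ e : A, IsIdempotentElem e ∧ e ≠ 0
  · obtain ⟨e, he, he0⟩ := hidem
    obtain ⟨C, hC⟩ := he.exists_basis_of_not_exists_one he0 hdim hnounit
    exact ⟨C, hC.imp_right (Or.imp_right Or.inl)⟩
  push Not at hidem
  by_cases hsq : ∃ a : A, a * a ≠ 0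
  · obtain ⟨a, ha⟩ := hsq
    obtain ⟨C, hC⟩ := exists_basis_of_mul_self_ne_zero hdim hidem ha
    exact ⟨C, Or.inr (Or.inr (Or.inr (Or.inl hC)))⟩
  push Not at hsq
  have hzero := mul_eq_zero_of_forall_mul_self_eq_zero hdim hsq
  have : Module.Finite k A := finite_of_finrank_eq_succ hdim
  exact ⟨finBasisOfFinrankEq k A hdim,
    Or.inr (Or.inr (Or.inr (Or.inr ⟨hzero _ _, hzero _ _, hzero _ _, hzero _ _⟩)))⟩
end

section
/- Let k be a field, c ∈ k, and let A be the 2-dimensional k-vector space with basis {x, y} and the k-bilinear multiplication determined by x² = x, xy = 0, yx = cy, y² = 0. Let Δ : A → A ⊗ A be the linear map with Δx = x⊗x and Δy = x⊗y. Then Δ is coassociative, Δ(ab) = Δ(a)Δ(b) for all a, b ∈ A, and the self-distributivity identity holds: for all a, b ∈ A, (a·b)·x = (a·x)·(b·x) and (a·b)·y = (a·x)·(b·y). -/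
/-!
Each identity is linear in every argument (bilinear in `a, b` for the multiplicativity of `Δ`
and the self-distributivity laws), so it suffices to check it on the basis `x, y`, where it
reduces to the multiplication table.
-/

section BasisChecks

variable {k A C ι : Type*} [CommSemiring k]
  [NonUnitalNonAssocSemiring A] [Module k A] [SMulCommClass k A A] [IsScalarTower k A A]

theorem LinearMap.map_mul_of_basis
    [NonUnitalNonAssocSemiring C] [Module k C] [SMulCommClass k C C] [IsScalarTower k C C]
    (b : Module.Basis ι k A) (f : A →ₗ[k] C) (h : ∀ i j, f (b i * b j) = f (b i) * f (b j))
    (a a' : A) : f (a * a') = f a * f a' := by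
  have hbil : (LinearMap.mul k A).compr₂ f = (LinearMap.mul k C).compl₁₂ f f :=
    LinearMap.ext_basis b b h
  exact congr($hbil a a')

theorem mul_mul_eq_mul_mul_mul_of_basis (b : Module.Basis ι k A) (z u w : A)
    (h : ∀ i j, (b i * b j) * z = (b i * u) * (b j * w)) (a a' : A) :
    (a * a') * z = (a * u) * (a' * w) := by
  have hbil : (LinearMap.mul k A).compr₂ ((LinearMap.mul k A).flip z) =
      (LinearMap.mul k A).compl₁₂ ((LinearMap.mul k A).flip u) ((LinearMap.mul k A).flip w) :=
    LinearMap.ext_basis b b h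
  exact congr($hbil a a')

end BasisChecks

open TensorProduct in
/-- The 2-dimensional algebra with basis `{x, y}`,
multiplication `x² = x, xy = 0, yx = c•y, y² = 0` and comultiplication
`Δx = x⊗x, Δy = x⊗y` is a (non-counital) self-distributive bialgebra. -/
theorem stmt_4 (k A : Type*) [Field k] (c : k)
    [NonUnitalNonAssocRing A] [Module k A]
    [SMulCommClass k A A] [IsScalarTower k A A]
    (B : Module.Basis (Fin 2) k A) (x y : A) (hx : x = B 0) (hy : y = B 1)
    (hxx : x * x = x) (hxy : x * y = 0) (hyx : y * x = c • y) (hyy : y * y = 0)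
    (Δ : A →ₗ[k] A ⊗[k] A)
    (hΔx : Δ x = x ⊗ₜ[k] x) (hΔy : Δ y = x ⊗ₜ[k] y) :
    ((TensorProduct.assoc k A A A).toLinearMap ∘ₗ Δ.rTensor A ∘ₗ Δ = Δ.lTensor A ∘ₗ Δ)
    ∧ (∀ a b : A, Δ (a * b) = Δ a * Δ b)
    ∧ (∀ a b : A, (a * b) * x = (a * x) * (b * x) ∧ (a * b) * y = (a * x) * (b * y)) := by
  subst hx hy
  refine ⟨B.ext fun i => ?_, LinearMap.map_mul_of_basis B Δ ?_, fun a b =>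
    ⟨mul_mul_eq_mul_mul_mul_of_basis B _ _ _ ?_ a b, mul_mul_eq_mul_mul_mul_of_basis B _ _ _ ?_ a b⟩⟩
  · fin_cases i <;> simp [hΔx, hΔy]
  · simp [Fin.forall_fin_two, hxx, hxy, hyx, hyy, hΔx, hΔy, Algebra.TensorProduct.tmul_mul_tmul,
      smul_tmul']
  all_goals simp [Fin.forall_fin_two, hxx, hxy, hyx, hyy, smul_mul_assoc, mul_smul_comm]
end

section
/- Let k be a field, c ∈ k, and let A be the 2-dimensional k-vector space with basis {x, y} and the k-bilinear multiplication determined by x² = x, xy = y, yx = cx, y² = cy. Let Δ : A → A ⊗ A be the linear map with Δx = x⊗x and Δy = x⊗y. Then Δ is coassociative, Δ(ab) = Δ(a)Δ(b) for all a, b ∈ A, and the self-distributivity identity holds: for all a, b ∈ A, (a·b)·x = (a·x)·(b·x) and (a·b)·y = (a·x)·(b·y). -/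
/-!
Both structure maps degenerate: `Δ a = x ⊗ a` for every `a`, and `a * b = ε(a) • b` for the
functional `ε` with `ε x = 1`, `ε y = c`. Multiplicativity of `Δ` then reduces to `x * x = x`,
coassociativity says `x ⊗ x ⊗ a = x ⊗ x ⊗ a`, and both sides of self-distributivity equal
`(ε a * ε b) • z`.
-/

open TensorProduct

theorem TensorProduct.assoc_comp_rTensor_mk_comp_mk {R M : Type*} [CommSemiring R]
    [AddCommMonoid M] [Module R M] (e : M) :
    (TensorProduct.assoc R M M M).toLinearMap ∘ₗ (mk R M M e).rTensor M ∘ₗ mk R M M e =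
      (mk R M M e).lTensor M ∘ₗ mk R M M e := by
  ext a
  simp

section LeftScalarMultiplication

variable {k A : Type*} [CommSemiring k] [NonUnitalNonAssocSemiring A] [Module k A]

theorem Module.Basis.mul_eq_constr_smul [SMulCommClass k A A] [IsScalarTower k A A]
    {ι : Type*} (B : Module.Basis ι k A) (ε : ι → k)
    (h : ∀ i j, B i * B j = ε i • B j) (a b : A) :
    a * b = B.constr k ε a • b := by
  have hbilin : LinearMap.mul k A = (B.constr k ε).smulRight LinearMap.id :=
    LinearMap.ext_basis B B fun i j => by simp [h]
  exact LinearMap.congr_fun₂ hbilin a b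

theorem mul_mul_eq_mul_mul_mul_of_mul_eq_smul (ε : A →ₗ[k] k)
    (hmul : ∀ a b : A, a * b = ε a • b) {e : A} (he : ε e = 1) (a b z : A) :
    a * b * z = a * e * (b * z) := by
  simp only [hmul, map_smul, smul_eq_mul, he, mul_one, smul_smul]

end LeftScalarMultiplication

open TensorProduct in
/-- The 2-dimensional algebra with basis `{x, y}`,
multiplication `x² = x, xy = y, yx = c•x, y² = c•y` and comultiplication
`Δx = x⊗x, Δy = x⊗y` is a (non-counital) self-distributive bialgebra. -/
theorem stmt_5 (k A : Type*) [Field k] (c : k)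
    [NonUnitalNonAssocRing A] [Module k A]
    [SMulCommClass k A A] [IsScalarTower k A A]
    (B : Module.Basis (Fin 2) k A) (x y : A) (hx : x = B 0) (hy : y = B 1)
    (hxx : x * x = x) (hxy : x * y = y) (hyx : y * x = c • x) (hyy : y * y = c • y)
    (Δ : A →ₗ[k] A ⊗[k] A)
    (hΔx : Δ x = x ⊗ₜ[k] x) (hΔy : Δ y = x ⊗ₜ[k] y) :
    ((TensorProduct.assoc k A A A).toLinearMap ∘ₗ Δ.rTensor A ∘ₗ Δ = Δ.lTensor A ∘ₗ Δ)
    ∧ (∀ a b : A, Δ (a * b) = Δ a * Δ b)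
    ∧ (∀ a b : A, (a * b) * x = (a * x) * (b * x) ∧ (a * b) * y = (a * x) * (b * y)) := by
  have hΔ : Δ = mk k A A x :=
    B.ext fun i => by fin_cases i <;> simp [← hx, ← hy, hΔx, hΔy]
  have hmul : ∀ a b : A, a * b = B.constr k ![1, c] a • b :=
    B.mul_eq_constr_smul _ fun i j => by
      fin_cases i <;> fin_cases j <;> simp [← hx, ← hy, hxx, hxy, hyx, hyy]
  have hεx : B.constr k ![1, c] x = 1 := by simp [hx]
  subst hΔ
  refine ⟨assoc_comp_rTensor_mk_comp_mk x, fun a b => by simp [hxx], fun a b => ⟨?_, ?_⟩⟩ <;>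
    exact mul_mul_eq_mul_mul_mul_of_mul_eq_smul _ hmul hεx a b _
end

section
/- Let k be a field, c, d ∈ k, and let A be the 2-dimensional k-vector space with basis {x, y} and the k-bilinear multiplication determined by x² = x, xy = y, yx = cx − y, y² = dx. Let Δ : A → A ⊗ A be the linear map with Δx = x⊗x and Δy = x⊗y. Then Δ is coassociative, Δ(ab) = Δ(a)Δ(b) for all a, b ∈ A, and the self-distributivity identity holds: for all a, b ∈ A, (a·b)·x = (a·x)·(b·x) and (a·b)·y = (a·x)·(b·y). -/
/-! Coassociativity is linear in its argument, and multiplicativity of `Δ` and the two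
self-distributivity identities are bilinear in `(a, b)`, so each reduces to finitely many checks
on the basis `{x, y}`, which the multiplication table settles. -/

open TensorProduct

section Basis

variable {k A M : Type*} [CommRing k] [AddCommGroup A] [Module k A] [AddCommGroup M] [Module k M]
  {B : Module.Basis (Fin 2) k A} {x y : A}

theorem linearMap_ext_of_basis_pair (hx : x = B 0) (hy : y = B 1) {f g : A →ₗ[k] M}
    (hfx : f x = g x) (hfy : f y = g y) : f = g :=
  B.ext <| Fin.forall_fin_two.2 ⟨hx ▸ hfx, hy ▸ hfy⟩

theorem bilinear_ext_of_basis_pair (hx : x = B 0) (hy : y = B 1) {f g : A →ₗ[k] A →ₗ[k] M}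
    (hxx : f x x = g x x) (hxy : f x y = g x y) (hyx : f y x = g y x) (hyy : f y y = g y y) :
    f = g :=
  LinearMap.ext_basis B B <| by
    subst hx hy
    simp only [Fin.forall_fin_two]
    exact ⟨⟨hxx, hxy⟩, hyx, hyy⟩

theorem coassoc_of_basis_pair (hx : x = B 0) (hy : y = B 1) {Δ : A →ₗ[k] A ⊗[k] A}
    (hΔx : Δ x = x ⊗ₜ x) (hΔy : Δ y = x ⊗ₜ y) :
    (TensorProduct.assoc k A A A).toLinearMap ∘ₗ Δ.rTensor A ∘ₗ Δ = Δ.lTensor A ∘ₗ Δ :=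
  linearMap_ext_of_basis_pair hx hy (by simp [hΔx]) (by simp [hΔx, hΔy])

end Basis

section

variable {k A : Type*} [CommRing k] [NonUnitalNonAssocRing A] [Module k A]
  [SMulCommClass k A A] [IsScalarTower k A A]

structure MulTable (c d : k) (x y : A) : Prop where
  xx : x * x = x
  xy : x * y = y
  yx : y * x = c • x - y
  yy : y * y = d • x

variable {c d : k} {x y : A} {B : Module.Basis (Fin 2) k A}

namespace MulTable

theorem map_mul (h : MulTable c d x y) (hx : x = B 0) (hy : y = B 1)
    {Δ : A →ₗ[k] A ⊗[k] A} (hΔx : Δ x = x ⊗ₜ x) (hΔy : Δ y = x ⊗ₜ y) (a b : A) :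
    Δ (a * b) = Δ a * Δ b := by
  suffices (LinearMap.mul k A).compr₂ Δ = (LinearMap.mul k (A ⊗[k] A)).compl₁₂ Δ Δ from
    congr($this a b)
  apply bilinear_ext_of_basis_pair hx hy <;>
    simp [h.xx, h.xy, h.yx, h.yy, hΔx, hΔy, Algebra.TensorProduct.tmul_mul_tmul, tmul_sub]

theorem selfDistrib_x (h : MulTable c d x y) (hx : x = B 0) (hy : y = B 1) (a b : A) :
    (a * b) * x = (a * x) * (b * x) := by
  suffices (LinearMap.mul k A).compr₂ (LinearMap.mulRight k x) =
      (LinearMap.mul k A).compl₁₂ (LinearMap.mulRight k x) (LinearMap.mulRight k x) from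
    congr($this a b)
  apply bilinear_ext_of_basis_pair hx hy <;>
    simp [h.xx, h.xy, h.yx, h.yy, sub_mul, mul_sub, smul_mul_assoc, mul_smul_comm]

theorem selfDistrib_y (h : MulTable c d x y) (hx : x = B 0) (hy : y = B 1) (a b : A) :
    (a * b) * y = (a * x) * (b * y) := by
  suffices (LinearMap.mul k A).compr₂ (LinearMap.mulRight k y) =
      (LinearMap.mul k A).compl₁₂ (LinearMap.mulRight k x) (LinearMap.mulRight k y) from
    congr($this a b)
  apply bilinear_ext_of_basis_pair hx hy <;>
    simp [h.xx, h.xy, h.yx, h.yy, sub_mul, smul_mul_assoc]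

end MulTable

end

/-- The 2-dimensional algebra with basis `{x, y}`,
multiplication `x² = x, xy = y, yx = c•x − y, y² = d•x` and comultiplication
`Δx = x⊗x, Δy = x⊗y` is a (non-counital) self-distributive bialgebra. -/
theorem stmt_6 (k A : Type*) [Field k] (c d : k)
    [NonUnitalNonAssocRing A] [Module k A]
    [SMulCommClass k A A] [IsScalarTower k A A]
    (B : Module.Basis (Fin 2) k A) (x y : A) (hx : x = B 0) (hy : y = B 1)
    (hxx : x * x = x) (hxy : x * y = y) (hyx : y * x = c • x - y) (hyy : y * y = d • x)
    (Δ : A →ₗ[k] A ⊗[k] A)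
    (hΔx : Δ x = x ⊗ₜ[k] x) (hΔy : Δ y = x ⊗ₜ[k] y) :
    ((TensorProduct.assoc k A A A).toLinearMap ∘ₗ Δ.rTensor A ∘ₗ Δ = Δ.lTensor A ∘ₗ Δ)
    ∧ (∀ a b : A, Δ (a * b) = Δ a * Δ b)
    ∧ (∀ a b : A, (a * b) * x = (a * x) * (b * x) ∧ (a * b) * y = (a * x) * (b * y)) := by
  have h : MulTable c d x y := ⟨hxx, hxy, hyx, hyy⟩
  exact ⟨coassoc_of_basis_pair hx hy hΔx hΔy, h.map_mul hx hy hΔx hΔy,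
    fun a b => ⟨h.selfDistrib_x hx hy a b, h.selfDistrib_y hx hy a b⟩⟩
end

section
/- Let k be a field, let c₁, c₂ ∈ k with c₂ ≠ 1, and let A be the 2-dimensional k-vector space with basis {x, y} and the k-bilinear multiplication determined by x² = x, xy = y, yx = c₁x + c₂y, y² = (−c₁²c₂/(1−c₂)²) x + (c₁(c₂+1)/(1−c₂)) y. Let Δ : A → A ⊗ A be the linear map with Δx = x⊗x and Δy = x⊗y. Then Δ is coassociative, Δ(ab) = Δ(a)Δ(b) for all a, b ∈ A, and the self-distributivity identity holds: for all a, b ∈ A, (a·b)·x = (a·x)·(b·x) and (a·b)·y = (a·x)·(b·y). -/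
/-!
Since `Δ` agrees with `a ↦ x ⊗ a` on the basis, `Δ a = x ⊗ a` for all `a`; coassociativity is then
formal and multiplicativity only needs `x² = x`. Both self-distributivity identities are bilinear
in `(a, b)`, so it suffices to check them on pairs of basis vectors. Writing `y² = α x + β y`, all
cases but `(y y) x` and `(y y) y` hold for any `α, β`, and comparing coefficients in these two
leaves three polynomial relations between `c₁, c₂, α, β`, which the given `α, β` satisfy.
-/

open TensorProduct

theorem TensorProduct.coassoc_mk {R M : Type*} [CommSemiring R] [AddCommMonoid M] [Module R M]
    (x : M) :
    (TensorProduct.assoc R M M M).toLinearMap ∘ₗ (mk R M M x).rTensor M ∘ₗ mk R M M x =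
      (mk R M M x).lTensor M ∘ₗ mk R M M x := by
  ext a
  simp

section MulTable

variable {k A : Type*} [Field k] [NonUnitalNonAssocRing A] [Module k A]
  [SMulCommClass k A A] [IsScalarTower k A A]

theorem mul_mul_eq_mul_mul_of_basis {ι : Type*} (B : Module.Basis ι k A) (u v w : A)
    (h : ∀ i j, (B i * B j) * u = (B i * v) * (B j * w)) (a b : A) :
    (a * b) * u = (a * v) * (b * w) :=
  LinearMap.congr_fun₂ (LinearMap.ext_basis
    (B := (LinearMap.mul k A).compr₂ (LinearMap.mulRight k u))
    (B' := (LinearMap.mul k A).compl₁₂ (LinearMap.mulRight k v) (LinearMap.mulRight k w))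
    B B h) a b

variable {c₁ c₂ α β : k} {x y : A}

theorem selfDistrib_yyx (hxx : x * x = x) (hxy : x * y = y) (hyx : y * x = c₁ • x + c₂ • y)
    (hyy : y * y = α • x + β • y)
    (h₁ : α * (1 - c₂ ^ 2) + c₁ * β = c₁ ^ 2 * (1 + c₂)) (h₂ : β * (1 - c₂) = c₁ * (1 + c₂)) :
    (y * y) * x = (y * x) * (y * x) := by
  simp only [hyy, hyx, add_mul, mul_add, smul_mul_assoc, mul_smul_comm, hxx, hxy, smul_add,
    smul_smul]
  match_scalars
  · linear_combination h₁
  · linear_combination c₂ * h₂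

theorem selfDistrib_yyy (hxx : x * x = x) (hxy : x * y = y) (hyx : y * x = c₁ • x + c₂ • y)
    (hyy : y * y = α • x + β • y)
    (h₂ : β * (1 - c₂) = c₁ * (1 + c₂)) (h₃ : α * (1 - c₂ ^ 2) + β ^ 2 * (1 - c₂) = c₁ * β) :
    (y * y) * y = (y * x) * (y * y) := by
  simp only [hyy, hyx, add_mul, mul_add, smul_mul_assoc, mul_smul_comm, hxx, hxy, smul_add,
    smul_smul]
  match_scalars
  · linear_combination h₃
  · linear_combination α * h₂

theorem selfDistrib_of_mulTable (B : Module.Basis (Fin 2) k A) (hx : x = B 0) (hy : y = B 1)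
    (hxx : x * x = x) (hxy : x * y = y) (hyx : y * x = c₁ • x + c₂ • y)
    (hyy : y * y = α • x + β • y) (h₁ : α * (1 - c₂ ^ 2) + c₁ * β = c₁ ^ 2 * (1 + c₂))
    (h₂ : β * (1 - c₂) = c₁ * (1 + c₂)) (h₃ : α * (1 - c₂ ^ 2) + β ^ 2 * (1 - c₂) = c₁ * β)
    (a b : A) : (a * b) * x = (a * x) * (b * x) ∧ (a * b) * y = (a * x) * (b * y) := by
  constructor <;> apply mul_mul_eq_mul_mul_of_basis B <;>
    simp only [Fin.forall_fin_two, ← hx, ← hy]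
  · refine ⟨⟨?_, ?_⟩, ?_, selfDistrib_yyx hxx hxy hyx hyy h₁ h₂⟩ <;>
      simp only [hxx, hxy, hyx, mul_add, mul_smul_comm]
  · refine ⟨⟨?_, ?_⟩, ?_, selfDistrib_yyy hxx hxy hyx hyy h₂ h₃⟩ <;>
      simp only [hxx, hxy, hyy, mul_add, mul_smul_comm]

end MulTable

open TensorProduct in
/-- The 2-dimensional algebra with basis `{x, y}`, `c₂ ≠ 1`,
multiplication `x² = x, xy = y, yx = c₁•x + c₂•y,
y² = (−c₁²c₂/(1−c₂)²)•x + (c₁(c₂+1)/(1−c₂))•y` and comultiplication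
`Δx = x⊗x, Δy = x⊗y` is a (non-counital) self-distributive bialgebra. -/
theorem stmt_7 (k A : Type*) [Field k] (c₁ c₂ : k) (hc₂ : c₂ ≠ 1)
    [NonUnitalNonAssocRing A] [Module k A]
    [SMulCommClass k A A] [IsScalarTower k A A]
    (B : Module.Basis (Fin 2) k A) (x y : A) (hx : x = B 0) (hy : y = B 1)
    (hxx : x * x = x) (hxy : x * y = y) (hyx : y * x = c₁ • x + c₂ • y)
    (hyy : y * y = (-(c₁ ^ 2) * c₂ / (1 - c₂) ^ 2) • x + (c₁ * (c₂ + 1) / (1 - c₂)) • y)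
    (Δ : A →ₗ[k] A ⊗[k] A)
    (hΔx : Δ x = x ⊗ₜ[k] x) (hΔy : Δ y = x ⊗ₜ[k] y) :
    ((TensorProduct.assoc k A A A).toLinearMap ∘ₗ Δ.rTensor A ∘ₗ Δ = Δ.lTensor A ∘ₗ Δ)
    ∧ (∀ a b : A, Δ (a * b) = Δ a * Δ b)
    ∧ (∀ a b : A, (a * b) * x = (a * x) * (b * x) ∧ (a * b) * y = (a * x) * (b * y)) := by
  have hΔ : Δ = mk k A A x :=
    B.ext <| Fin.forall_fin_two.2 ⟨by simp [← hx, hΔx], by simp [← hy, hΔy]⟩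
  subst hΔ
  have h1c : (1 : k) - c₂ ≠ 0 := sub_ne_zero.2 hc₂.symm
  refine ⟨coassoc_mk x,
    fun a b => by simp only [mk_apply, Algebra.TensorProduct.tmul_mul_tmul, hxx],
    selfDistrib_of_mulTable B hx hy hxx hxy hyx hyy ?_ ?_ ?_⟩ <;>
  · field_simp
    ring
end

section
/- Let k be a field and let A be the 2-dimensional k-vector space with basis {x, y}. Let Δ : A → A ⊗ A be the linear map with Δx = x⊗x and Δy = 0. Then for each of the following two multiplication tables (with parameter b ∈ k, resp. c ∈ k): (i) x² = 0, xy = by, yx = 0, y² = 0; (ii) x² = x, xy = 0, yx = cy, y² = 0, the map Δ is coassociative, Δ(ab) = Δ(a)Δ(b) for all a, b ∈ A, and the self-distributivity identity holds: for all a, b ∈ A, (a·b)·x = (a·x)·(b·x) and (a·b)·y = 0. -/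
/-!
Coassociativity is linear in its argument and multiplicativity of `Δ` is bilinear, so both reduce
to the basis vectors. The same holds for self-distributivity: at `x` it says that right
multiplication by `x` is multiplicative, and at `y` that it kills all products. On basis vectors
everything is read off from the multiplication tables.
-/

open TensorProduct

theorem Module.Basis.coassoc_of_grouplike_or_zero {R A ι : Type*} [CommSemiring R]
    [AddCommMonoid A] [Module R A] (B : Module.Basis ι R A) (Δ : A →ₗ[R] A ⊗[R] A)
    (hΔ : ∀ i, Δ (B i) = B i ⊗ₜ B i ∨ Δ (B i) = 0) :
    (TensorProduct.assoc R A A A).toLinearMap ∘ₗ Δ.rTensor A ∘ₗ Δ = Δ.lTensor A ∘ₗ Δ := by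
  refine B.ext fun i => ?_
  rcases hΔ i with h | h <;> simp [h]

section

variable {R A ι : Type*} [CommSemiring R] [NonUnitalNonAssocSemiring A] [Module R A]
  [SMulCommClass R A A] [IsScalarTower R A A] (B : Module.Basis ι R A)

theorem Module.Basis.map_mul_of_map_mul {C : Type*} [NonUnitalNonAssocSemiring C] [Module R C]
    [SMulCommClass R C C] [IsScalarTower R C C] (f : A →ₗ[R] C)
    (h : ∀ i j, f (B i * B j) = f (B i) * f (B j)) (u v : A) : f (u * v) = f u * f v := by
  have : (LinearMap.mul R A).compr₂ f = (LinearMap.mul R C ∘ₗ f).compl₂ f :=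
    LinearMap.ext_basis B B h
  exact LinearMap.congr_fun₂ this u v

theorem Module.Basis.mul_mul_eq_zero_of_mul_mul_eq_zero (z : A) (h : ∀ i j, B i * B j * z = 0)
    (u v : A) : u * v * z = 0 := by
  have : (LinearMap.mul R A).compr₂ (LinearMap.mulRight R z) = 0 := LinearMap.ext_basis B B h
  exact LinearMap.congr_fun₂ this u v

end

open TensorProduct in
/-- With comultiplication `Δx = x⊗x, Δy = 0`, each of the two
multiplication tables (i) `x² = 0, xy = b•y, yx = 0, y² = 0` and
(ii) `x² = x, xy = 0, yx = c•y, y² = 0` yields a (non-counital)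
self-distributive bialgebra. -/
theorem stmt_10 (k A : Type*) [Field k] (b c : k)
    [NonUnitalNonAssocRing A] [Module k A]
    [SMulCommClass k A A] [IsScalarTower k A A]
    (B : Module.Basis (Fin 2) k A) (x y : A) (hx : x = B 0) (hy : y = B 1)
    (Δ : A →ₗ[k] A ⊗[k] A)
    (hΔx : Δ x = x ⊗ₜ[k] x) (hΔy : Δ y = 0) :
    ((x * x = 0 ∧ x * y = b • y ∧ y * x = 0 ∧ y * y = 0) →
      ((TensorProduct.assoc k A A A).toLinearMap ∘ₗ Δ.rTensor A ∘ₗ Δ = Δ.lTensor A ∘ₗ Δ)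
      ∧ (∀ u v : A, Δ (u * v) = Δ u * Δ v)
      ∧ (∀ u v : A, (u * v) * x = (u * x) * (v * x) ∧ (u * v) * y = 0)) ∧
    ((x * x = x ∧ x * y = 0 ∧ y * x = c • y ∧ y * y = 0) →
      ((TensorProduct.assoc k A A A).toLinearMap ∘ₗ Δ.rTensor A ∘ₗ Δ = Δ.lTensor A ∘ₗ Δ)
      ∧ (∀ u v : A, Δ (u * v) = Δ u * Δ v)
      ∧ (∀ u v : A, (u * v) * x = (u * x) * (v * x) ∧ (u * v) * y = 0)) := by
  subst hx hy
  have hcoassoc := B.coassoc_of_grouplike_or_zero Δ fun i => by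
    fin_cases i
    exacts [.inl hΔx, .inr hΔy]
  constructor <;> rintro ⟨hxx, hxy, hyx, hyy⟩ <;>
    refine ⟨hcoassoc, B.map_mul_of_map_mul Δ ?_, fun u v =>
      ⟨B.map_mul_of_map_mul (LinearMap.mulRight k (B 0)) ?_ u v,
        B.mul_mul_eq_zero_of_mul_mul_eq_zero _ ?_ u v⟩⟩ <;>
    intro i j <;> fin_cases i <;> fin_cases j <;>
    simp [hxx, hxy, hyx, hyy, hΔx, hΔy, smul_mul_assoc, mul_smul_comm, smul_smul]
end

section
/- Let k be a field, let d₁, d₂ ∈ k with d₁ ≠ 0, and let A be the 2-dimensional k-vector space with basis {x, y} and the k-bilinear multiplication determined by x² = 0, xy = −d₂x − (d₂²/d₁)y, yx = 0, y² = d₁x + d₂y. Then (a·b)·c = 0 for all a, b, c ∈ A; consequently, together with the zero comultiplication Δ = 0, A is a self-distributive bialgebra. -/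
/-! The product of any two elements is a multiple of `u = d₁ • x + d₂ • y`: indeed `y * y = u`
and `x * y = -(d₂ / d₁) • u`, while `x * x = y * x = 0`. On the other hand `u` is a left
annihilator, since `u * x = 0` and `u * y = d₁ • (x * y) + d₂ • u = -d₂ • u + d₂ • u = 0`. -/

theorem mul_mul_eq_zero_of_basis {ι k A : Type*} [CommSemiring k] [NonUnitalNonAssocSemiring A]
    [Module k A] [SMulCommClass k A A] [IsScalarTower k A A] (B : Module.Basis ι k A)
    (h : ∀ i j l, B i * B j * B l = 0) (a b c : A) : a * b * c = 0 := by
  have hzero : (LinearMap.mul k A).compr₂ (LinearMap.mul k A) = 0 :=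
    B.ext fun i => B.ext fun j => B.ext fun l => h i j l
  exact LinearMap.congr_fun₂ (LinearMap.congr_fun hzero a) b c

/-- The 2-dimensional algebra with basis `{x, y}`, `d₁ ≠ 0`, and
multiplication `x² = 0, xy = −d₂•x − (d₂²/d₁)•y, yx = 0, y² = d₁•x + d₂•y`
satisfies `(a·b)·c = 0` for all `a, b, c`; hence with zero comultiplication it
is a self-distributive bialgebra. -/
theorem stmt_12 (k A : Type*) [Field k] (d₁ d₂ : k) (hd₁ : d₁ ≠ 0)
    [NonUnitalNonAssocRing A] [Module k A]
    [SMulCommClass k A A] [IsScalarTower k A A]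
    (B : Module.Basis (Fin 2) k A) (x y : A) (hx : x = B 0) (hy : y = B 1)
    (hxx : x * x = 0) (hxy : x * y = (-d₂) • x - (d₂ ^ 2 / d₁) • y)
    (hyx : y * x = 0) (hyy : y * y = d₁ • x + d₂ • y) :
    ∀ a b c : A, (a * b) * c = 0 := by
  set u := d₁ • x + d₂ • y with hu
  have hxy_u : x * y = (-(d₂ / d₁)) • u := by
    rw [hxy, hu]
    match_scalars <;> field_simp
  have hux : u * x = 0 := by
    rw [hu, add_mul, smul_mul_assoc, smul_mul_assoc, hxx, hyx, smul_zero, smul_zero, add_zero]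
  have huy : u * y = 0 := by
    rw [hu, add_mul, smul_mul_assoc, smul_mul_assoc, hxy_u, hyy, smul_smul]
    match_scalars <;> field_simp <;> ring
  refine mul_mul_eq_zero_of_basis B fun i j l => ?_
  fin_cases i <;> fin_cases j <;> fin_cases l <;>
    simp [← hx, ← hy, hxx, hyx, hxy_u, hyy, smul_mul_assoc, hux, huy]
end

section
/- Let k be a field, let a₁, d₁, d₂ ∈ k with d₁ ≠ 0 and d₂ ≠ 0, and let A be the 2-dimensional k-vector space with basis {x, y} and the k-bilinear multiplication determined by x² = a₁(x + (d₂/d₁)y), xy = −d₂(x + (d₂/d₁)y), yx = −(a₁d₁/d₂)(x + (d₂/d₁)y), y² = d₁(x + (d₂/d₁)y). Then (a·b)·c = 0 for all a, b, c ∈ A; consequently, together with the zero comultiplication Δ = 0, A is a self-distributive bialgebra. -/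
/-!
Every product of two basis vectors is a multiple of `w = x + (d₂/d₁) y`, so by bilinearity every
product `a * b` is; and `w * x = w * y = 0`, so `w` is a left annihilator of the whole algebra.
-/

open Submodule

section SpanningSet

variable {k A : Type*} [CommSemiring k] [NonUnitalNonAssocSemiring A] [Module k A]
  [SMulCommClass k A A] {S : Set A}

theorem mul_eq_zero_of_forall_mul_eq_zero_of_span_eq_top (hS : span k S = ⊤) {w : A}
    (hw : ∀ s ∈ S, w * s = 0) (c : A) : w * c = 0 := by
  have hker : span k S ≤ LinearMap.ker (LinearMap.mulLeft k w) := span_le.2 hw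
  exact hker (hS ▸ mem_top : c ∈ span k S)

theorem mul_mem_of_forall_mul_mem_of_span_eq_top [IsScalarTower k A A] (hS : span k S = ⊤)
    {P : Submodule k A} (hP : ∀ s ∈ S, ∀ t ∈ S, s * t ∈ P) (a b : A) : a * b ∈ P := by
  have hle : map₂ (LinearMap.mul k A) (span k S) (span k S) ≤ P := by
    rw [map₂_span_span, span_le]
    rintro _ ⟨s, hs, t, ht, rfl⟩
    exact hP s hs t ht
  rw [hS] at hle
  exact hle (apply_mem_map₂ _ mem_top mem_top)

theorem mul_mul_eq_zero_of_span_eq_top [IsScalarTower k A A] (hS : span k S = ⊤) {w : A}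
    (hprod : ∀ s ∈ S, ∀ t ∈ S, s * t ∈ k ∙ w) (hw : ∀ s ∈ S, w * s = 0) (a b c : A) :
    a * b * c = 0 := by
  obtain ⟨r, hr⟩ := mem_span_singleton.1 (mul_mem_of_forall_mul_mem_of_span_eq_top hS hprod a b)
  rw [← hr, smul_mul_assoc, mul_eq_zero_of_forall_mul_eq_zero_of_span_eq_top hS hw c, smul_zero]

end SpanningSet

/-- The 2-dimensional algebra with basis `{x, y}`, `d₁ ≠ 0`,
`d₂ ≠ 0`, and multiplication `x² = a₁(x + (d₂/d₁)y), xy = −d₂(x + (d₂/d₁)y),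
yx = −(a₁d₁/d₂)(x + (d₂/d₁)y), y² = d₁(x + (d₂/d₁)y)` satisfies
`(a·b)·c = 0` for all `a, b, c`; hence with zero comultiplication it is a
self-distributive bialgebra. -/
theorem stmt_14 (k A : Type*) [Field k] (a₁ d₁ d₂ : k) (hd₁ : d₁ ≠ 0) (hd₂ : d₂ ≠ 0)
    [NonUnitalNonAssocRing A] [Module k A]
    [SMulCommClass k A A] [IsScalarTower k A A]
    (B : Module.Basis (Fin 2) k A) (x y : A) (hx : x = B 0) (hy : y = B 1)
    (hxx : x * x = a₁ • (x + (d₂ / d₁) • y))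
    (hxy : x * y = (-d₂) • (x + (d₂ / d₁) • y))
    (hyx : y * x = (-(a₁ * d₁ / d₂)) • (x + (d₂ / d₁) • y))
    (hyy : y * y = d₁ • (x + (d₂ / d₁) • y)) :
    ∀ a b c : A, (a * b) * c = 0 := by
  set w : A := x + (d₂ / d₁) • y with hw
  have hwx : w * x = 0 := by
    rw [hw, add_mul, smul_mul_assoc, hxx, hyx, smul_smul, ← add_smul]
    convert zero_smul k w
    field_simp
    ring
  have hwy : w * y = 0 := by
    rw [hw, add_mul, smul_mul_assoc, hxy, hyy, smul_smul, ← add_smul]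
    convert zero_smul k w
    field_simp
    ring
  refine mul_mul_eq_zero_of_span_eq_top B.span_eq (w := w) ?_ ?_ <;>
    simp only [Set.forall_mem_range, Fin.forall_fin_two, ← hx, ← hy]
  · have hmem (r : k) : r • w ∈ k ∙ w := smul_mem _ r (mem_span_singleton_self w)
    rw [hxx, hxy, hyx, hyy]
    exact ⟨⟨hmem _, hmem _⟩, hmem _, hmem _⟩
  · exact ⟨hwx, hwy⟩
end

section
/- Let k be a field with more than three elements and let A be a nonzero (not necessarily associative or unital) k-algebra satisfying the self-distributive law (a*b)*c = (a*c)*(b*c) for all a, b, c ∈ A. Then A cannot be a rack under its multiplication: it is not the case that for every u, v ∈ A there exists z ∈ A with z*u = v. (Indeed, if right translations were surjective then the multiplication of A would be identically zero, contradicting surjectivity onto nonzero elements.) -/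
/-- Over a field with more than three elements, a nonzero
self-distributive (not necessarily associative or unital) algebra cannot be a
rack under its multiplication: right translations cannot all be surjective. -/
theorem stmt_19 (k A : Type*) [Field k]
    [NonUnitalNonAssocRing A] [Module k A]
    [SMulCommClass k A A] [IsScalarTower k A A] [Nontrivial A]
    (hk : 3 < Cardinal.mk k)
    (hSD : ∀ a b c : A, (a * b) * c = (a * c) * (b * c)) :
    ¬ ∀ u v : A, ∃ z : A, z * u = v := by
  -- First find a scalar λ ≠ 0, 1
  have hlam : ∃ l : k, l ≠ 0 ∧ l ≠ 1 := by
    by_contra h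
    push_neg at h
    have hsub : (Set.univ : Set k) ⊆ {0, 1} := by
      intro x _
      rcases eq_or_ne x 0 with hx | hx
      · exact Or.inl hx
      · exact Or.inr (h x hx)
    have h2 : Cardinal.mk k ≤ 2 := by
      calc Cardinal.mk k = Cardinal.mk (Set.univ : Set k) := Cardinal.mk_univ.symm
        _ ≤ Cardinal.mk ({0, 1} : Set k) := Cardinal.mk_le_mk_of_subset hsub
        _ ≤ Cardinal.mk ({1} : Set k) + 1 := Cardinal.mk_insert_le
        _ = 2 := by rw [Cardinal.mk_singleton]; norm_num
    have h3 : (3 : Cardinal) < 2 := lt_of_lt_of_le hk h2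
    norm_num at h3
  obtain ⟨l, hl0, hl1⟩ := hlam
  -- Key: all triple products vanish
  have key : ∀ a b c : A, (a * b) * c = 0 := by
    intro a b c
    have h1 : (a * b) * (l • c) = (a * (l • c)) * (b * (l • c)) := hSD a b (l • c)
    have h2 : l • ((a * b) * c) = (l * l) • ((a * b) * c) := by
      calc l • ((a * b) * c) = (a * b) * (l • c) := (mul_smul_comm l (a*b) c).symm
        _ = (a * (l • c)) * (b * (l • c)) := h1
        _ = (l • (a * c)) * (l • (b * c)) := by
              rw [mul_smul_comm, mul_smul_comm]
        _ = (l * l) • ((a * c) * (b * c)) := by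
              rw [smul_mul_smul_comm]
        _ = (l * l) • ((a * b) * c) := by rw [← hSD]
    have h3 : (l - l * l) • ((a * b) * c) = 0 := by
      rw [sub_smul, h2, sub_self]
    have hne : l - l * l ≠ 0 := by
      intro h
      have h4 : l * (1 - l) = 0 := by linear_combination h
      rcases mul_eq_zero.mp h4 with h' | h'
      · exact hl0 h'
      · exact hl1 (sub_eq_zero.mp h').symm
    exact (smul_eq_zero.mp h3).resolve_left hne
  intro h
  obtain ⟨v, hv⟩ := exists_ne (0 : A)
  obtain ⟨z, hz⟩ := h v v
  obtain ⟨a, ha⟩ := h v z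
  rw [← ha, key] at hz
  exact hv hz.symm
end
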